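/- arXiv:2604.23873 — 3 statements merged into one kernel-verified Lean document; each statement's English description precedes it below -/
import Mathlib

section
/- Let e(x, y) be a real polynomial and S ⊆ ℝ^1 an open interval such that the leading coefficient of e with respect to y vanishes nowhere on S and the discriminant of e with respect to y vanishes nowhere on S. Then the number of distinct real roots of e(x0, y) in y is the same for all x0 ∈ S, and each root varies continuously in x0. -/
/-- The Sylvester matrix of `f` (regarded as having degree `m`) and `g`
(regarded as having degree `n`): the first `n` rows contain shifted
coefficient vectors of `f`, the remaining `m` rows those of `g`. -/
noncomputable def sylvester {R : Type*} [CommRing R] (m n : ℕ)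
    (f g : Polynomial R) : Matrix (Fin (m + n)) (Fin (m + n)) R :=
  Matrix.of fun i j =>
    if (i : ℕ) < n then
      (if (i : ℕ) ≤ (j : ℕ) ∧ (j : ℕ) ≤ (i : ℕ) + m
        then f.coeff (m + i - j) else 0)
    else
      (if (i : ℕ) - n ≤ (j : ℕ) ∧ (j : ℕ) ≤ ((i : ℕ) - n) + n
        then g.coeff (n + ((i : ℕ) - n) - j) else 0)

/-- The resultant of `f` and `g`, regarded as polynomials of degrees `m`
and `n` respectively, as the determinant of their Sylvester matrix. -/
noncomputable def resultant {R : Type*} [CommRing R] (m n : ℕ)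
    (f g : Polynomial R) : R :=
  (sylvester m n f g).det

/-- The discriminant of `f` with respect to its variable, defined (up to
normalization) as the resultant of `f` and its derivative. -/
noncomputable def polyDisc {R : Type*} [CommRing R] (f : Polynomial R) : R :=
  resultant f.natDegree (f.natDegree - 1) f (Polynomial.derivative f)

/-!
For `x` in the interval the fibre polynomial `e(x, ·)` is nonzero, and since its discriminant, a
resultant of it and its derivative, does not vanish, it is separable: all its real roots are
simple. A simple root persists and moves continuously, because the `y`-derivative keeps its sign
on a small box around it, so the fibre has exactly one sign change there; and the Cauchy bound
keeps all roots of nearby fibres in a fixed compact set, so no root appears from elsewhere.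
Hence near every point the sorted roots have constant number and vary continuously, and
connectedness of the interval makes the number constant throughout.
-/

open Filter Topology Metric Set
open scoped Polynomial Matrix NNReal

/-- `Polynomial.sylvester` lists the shifted coefficient vectors as columns with ascending
coefficients, `sylvester` as rows with descending ones. -/
theorem sylvester_eq_transpose_submatrix_rev {R : Type*} [CommRing R] (m n : ℕ)
    (f g : R[X]) :
    sylvester m n f g = ((Polynomial.sylvester f g m n).submatrix Fin.rev Fin.rev)ᵀ := by
  ext i j
  obtain ⟨i, rfl⟩ := Fin.rev_surjective i
  induction i using Fin.addCases with
  | left i =>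
    simp only [sylvester, Polynomial.sylvester, Matrix.transpose_apply, Matrix.submatrix_apply,
      Matrix.of_apply, Fin.rev_rev, Fin.addCases_left, Fin.val_rev, Fin.val_castAdd, Set.mem_Icc]
    split_ifs <;> first | omega | (congr 1; omega) | rfl
  | right i =>
    simp only [sylvester, Polynomial.sylvester, Matrix.transpose_apply, Matrix.submatrix_apply,
      Matrix.of_apply, Fin.rev_rev, Fin.addCases_right, Fin.val_rev, Fin.val_natAdd, Set.mem_Icc]
    split_ifs <;> first | omega | (congr 1; omega) | rfl

theorem resultant_eq_polynomial_resultant {R : Type*} [CommRing R] (m n : ℕ) (f g : R[X]) :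
    resultant m n f g = Polynomial.resultant f g m n := by
  rw [resultant, Polynomial.resultant, sylvester_eq_transpose_submatrix_rev, Matrix.det_transpose]
  exact Matrix.det_submatrix_equiv_self Fin.revPerm _

theorem polyDisc_map {R S : Type*} [CommRing R] [CommRing S] (φ : R →+* S) {f : R[X]}
    (hf : φ f.leadingCoeff ≠ 0) : polyDisc (f.map φ) = φ (polyDisc f) := by
  rw [polyDisc, polyDisc, Polynomial.natDegree_map_of_leadingCoeff_ne_zero φ hf,
    Polynomial.derivative_map, resultant_eq_polynomial_resultant,
    resultant_eq_polynomial_resultant, Polynomial.resultant_map_map]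

theorem separable_of_polyDisc_ne_zero {K : Type*} [Field K] {f : K[X]} (hf : f ≠ 0)
    (hdisc : polyDisc f ≠ 0) : f.Separable := by
  by_cases hdeg : f.natDegree = 0
  · rw [Polynomial.eq_C_of_natDegree_eq_zero hdeg, Polynomial.separable_C, isUnit_iff_ne_zero]
    exact fun h0 ↦ hf (by rw [Polynomial.eq_C_of_natDegree_eq_zero hdeg, h0, map_zero])
  obtain ⟨p, q, -, -, hpq⟩ := Polynomial.exists_mul_add_mul_eq_C_resultant f
    (Polynomial.derivative f) le_rfl (Polynomial.natDegree_derivative_le f) (.inl hdeg)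
  rw [← resultant_eq_polynomial_resultant, ← polyDisc] at hpq
  refine ⟨Polynomial.C (polyDisc f)⁻¹ * p, Polynomial.C (polyDisc f)⁻¹ * q, ?_⟩
  rw [mul_assoc, mul_assoc, ← mul_add, mul_comm p, mul_comm q, hpq, ← Polynomial.C_mul,
    inv_mul_cancel₀ hdisc, Polynomial.C_1]

theorem strictMonoOn_or_strictAntiOn_of_hasDerivAt_ne_zero {s : Set ℝ} (hs : Convex ℝ s)
    {f f' : ℝ → ℝ} (hf : ∀ y ∈ s, HasDerivAt f (f' y) y) (hf' : ∀ y ∈ s, f' y ≠ 0) :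
    StrictMonoOn f s ∨ StrictAntiOn f s := by
  have hcont : ContinuousOn f s := fun y hy ↦ (hf y hy).continuousAt.continuousWithinAt
  have hderiv : ∀ y ∈ interior s, deriv f y = f' y := fun y hy ↦
    (hf y (interior_subset hy)).deriv
  rcases hasDerivWithinAt_forall_lt_or_forall_gt_of_forall_ne hs
    (fun y hy ↦ (hf y hy).hasDerivWithinAt) hf' with hneg | hpos
  · exact .inr <| strictAntiOn_of_deriv_neg hs hcont fun y hy ↦
      hderiv y hy ▸ hneg y (interior_subset hy)
  · exact .inl <| strictMonoOn_of_deriv_pos hs hcont fun y hy ↦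
      hderiv y hy ▸ hpos y (interior_subset hy)

theorem mul_neg_of_strictMonoOn_or_strictAntiOn {f : ℝ → ℝ} {r η δ : ℝ}
    (hf : StrictMonoOn f (ball r η) ∨ StrictAntiOn f (ball r η)) (hr : f r = 0) (hδ : 0 < δ)
    (hδη : δ < η) : f (r - δ) * f (r + δ) < 0 := by
  have hl : r - δ ∈ ball r η := by rw [Real.ball_eq_Ioo]; constructor <;> linarith
  have hm : r ∈ ball r η := mem_ball_self (hδ.trans hδη)
  have hu : r + δ ∈ ball r η := by rw [Real.ball_eq_Ioo]; constructor <;> linarith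
  rcases hf with h | h
  · exact mul_neg_of_neg_of_pos (hr ▸ h hl hm (by linarith)) (hr ▸ h hm hu (by linarith))
  · exact mul_neg_of_pos_of_neg (hr ▸ h hl hm (by linarith)) (hr ▸ h hm hu (by linarith))

theorem IsPreconnected.exists_forall_eq_of_eventually_eq {α Y : Type*} [TopologicalSpace α]
    [TopologicalSpace Y] [DiscreteTopology Y] [Nonempty Y] {S : Set α} (hS : IsPreconnected S)
    {f : α → Y} (hf : ∀ x ∈ S, ∀ᶠ y in 𝓝 x, f y = f x) :
    ∃ c, ∀ x ∈ S, f x = c := by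
  have hcont : ContinuousOn f S := fun x hx ↦
    ContinuousAt.continuousWithinAt ((tendsto_pure.2 (hf x hx)).mono_right (pure_le_nhds _))
  obtain ⟨c, -, hc⟩ := hS.eqOn_const_of_mapsTo IsDiscrete.univ hcont (mapsTo_univ _ _)
    univ_nonempty
  exact ⟨c, hc⟩

section ZeroSets

variable {X : Type*} [TopologicalSpace X]

theorem exists_nhds_ball_strictMonoOn_or_strictAntiOn {F F' : X → ℝ → ℝ}
    (hderiv : ∀ x y, HasDerivAt (F x) (F' x y) y) {x₀ : X} {r : ℝ}
    (hF' : ContinuousAt (Function.uncurry F') (x₀, r)) (hr' : F' x₀ r ≠ 0) :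
    ∃ U ∈ 𝓝 x₀, ∃ η > 0, ∀ x ∈ U,
      StrictMonoOn (F x) (ball r η) ∨ StrictAntiOn (F x) (ball r η) := by
  have := hF'.eventually_ne hr'
  rw [nhds_prod_eq, eventually_prod_iff] at this
  obtain ⟨pU, hpU, pV, hpV, h⟩ := this
  obtain ⟨η, hη, hball⟩ := Metric.eventually_nhds_iff_ball.1 hpV
  exact ⟨{x | pU x}, hpU, η, hη, fun x hx ↦ strictMonoOn_or_strictAntiOn_of_hasDerivAt_ne_zero
    (convex_ball r η) (fun y _ ↦ hderiv x y) fun y hy ↦ h hx (hball y hy)⟩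

/-- A one-variable implicit function theorem, without differentiability in the parameter. -/
theorem eventually_existsUnique_zero_of_hasDerivAt_ne_zero {F F' : X → ℝ → ℝ}
    (hF : Continuous (Function.uncurry F)) (hderiv : ∀ x y, HasDerivAt (F x) (F' x y) y)
    {x₀ : X} {r : ℝ} (hF' : ContinuousAt (Function.uncurry F') (x₀, r))
    (hr : F x₀ r = 0) (hr' : F' x₀ r ≠ 0) :
    ∀ᶠ ε in 𝓝[>] (0 : ℝ), ∀ᶠ x in 𝓝 x₀, ∃! y, F x y = 0 ∧ dist y r < ε := by
  obtain ⟨U, hU, η, hη, hmono⟩ := exists_nhds_ball_strictMonoOn_or_strictAntiOn hderiv hF' hr'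
  filter_upwards [Ioo_mem_nhdsGT hη] with ε ⟨hε, hεη⟩
  have hsign := mul_neg_of_strictMonoOn_or_strictAntiOn (hmono x₀ (mem_of_mem_nhds hU)) hr
    (half_pos hε) (by linarith)
  have hcont : Continuous fun x ↦ F x (r - ε / 2) * F x (r + ε / 2) :=
    (hF.comp (continuous_id.prodMk continuous_const)).mul
      (hF.comp (continuous_id.prodMk continuous_const))
  filter_upwards [hU, hcont.continuousAt.eventually (gt_mem_nhds hsign)] with x hxU hx
  have hsub : uIcc (r - ε / 2) (r + ε / 2) ⊆ ball r ε := by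
    rw [uIcc_of_le (by linarith), Real.ball_eq_Ioo]
    exact Icc_subset_Ioo (by linarith) (by linarith)
  obtain ⟨y, hy, hy0⟩ := intermediate_value_uIcc
    (fun z _ ↦ (hderiv x z).continuousAt.continuousWithinAt)
    (show (0 : ℝ) ∈ uIcc (F x (r - ε / 2)) (F x (r + ε / 2)) by
      rw [mem_uIcc]; rcases mul_neg_iff.1 hx with h | h
      · exact .inr ⟨h.2.le, h.1.le⟩
      · exact .inl ⟨h.1.le, h.2.le⟩)
  have hεη' : ball r ε ⊆ ball r η := ball_subset_ball hεη.le
  refine ⟨y, ⟨hy0, hsub hy⟩, fun z ⟨hz0, hz⟩ ↦ ?_⟩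
  exact (hmono x hxU).elim (fun h ↦ h.injOn) (fun h ↦ h.injOn) (hεη' hz) (hεη' (hsub hy))
    (hz0.trans hy0.symm)

theorem eventually_zeroSet_subset {Y : Type*} [TopologicalSpace Y] {F : X → Y → ℝ}
    (hF : Continuous (Function.uncurry F)) {x₀ : X} {K : Set Y} (hK : IsCompact K)
    (hbdd : ∀ᶠ x in 𝓝 x₀, {y | F x y = 0} ⊆ K) {U : Set Y} (hU : IsOpen U)
    (hZU : {y | F x₀ y = 0} ⊆ U) : ∀ᶠ x in 𝓝 x₀, {y | F x y = 0} ⊆ U := by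
  have hKU : ∀ᶠ x in 𝓝 x₀, ∀ y ∈ K \ U, F x y ≠ 0 :=
    (hK.diff hU).eventually_forall_of_forall_eventually fun y hy ↦
      hF.continuousAt.eventually_ne fun h ↦ hy.2 (hZU h)
  filter_upwards [hbdd, hKU] with x hxK hxU y hy
  by_contra hyU
  exact hxU y ⟨hxK hy, hyU⟩ hy

def IsSmallPerturbation {α : Type*} [PseudoMetricSpace α] (ε : ℝ) (A B : Set α) : Prop :=
  (∀ a ∈ A, ∃! b, b ∈ B ∧ dist b a < ε) ∧ B ⊆ thickening ε A

theorem eventually_isSmallPerturbation_zeroSet {F F' : X → ℝ → ℝ}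
    (hF : Continuous (Function.uncurry F)) (hderiv : ∀ x y, HasDerivAt (F x) (F' x y) y)
    (hF' : Continuous (Function.uncurry F')) {x₀ : X} (hfin : {y | F x₀ y = 0}.Finite)
    (hsimple : ∀ y, F x₀ y = 0 → F' x₀ y ≠ 0) {K : Set ℝ} (hK : IsCompact K)
    (hbdd : ∀ᶠ x in 𝓝 x₀, {y | F x y = 0} ⊆ K) :
    ∀ᶠ ε in 𝓝[>] (0 : ℝ), ∀ᶠ x in 𝓝 x₀,
      IsSmallPerturbation ε {y | F x₀ y = 0} {y | F x y = 0} := by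
  have hunique := (eventually_all_finite hfin).2 fun r hr ↦
    eventually_existsUnique_zero_of_hasDerivAt_ne_zero hF hderiv hF'.continuousAt hr
      (hsimple r hr)
  filter_upwards [hunique, self_mem_nhdsWithin] with ε hε (hε0 : 0 < ε)
  filter_upwards [(eventually_all_finite hfin).2 hε, eventually_zeroSet_subset hF hK hbdd
    isOpen_thickening (self_subset_thickening hε0 _)] with x hx hsub
  exact ⟨hx, hsub⟩

end ZeroSets

noncomputable def Finset.nthSmallest {k : ℕ} (s : Finset ℝ) (i : Fin k) : ℝ :=
  if h : s.card = k then s.orderEmbOfFin h i else 0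

theorem Finset.nthSmallest_of_card_eq {k : ℕ} {s : Finset ℝ} (h : s.card = k) (i : Fin k) :
    s.nthSmallest i = s.orderEmbOfFin h i :=
  dif_pos h

theorem Finset.eventually_add_two_mul_le (t : Finset ℝ) :
    ∀ᶠ ε in 𝓝 (0 : ℝ), ∀ a ∈ t, ∀ b ∈ t, a < b → a + 2 * ε ≤ b := by
  refine (eventually_all_finset t).2 fun a _ ↦ (eventually_all_finset t).2 fun b _ ↦ ?_
  by_cases hab : a < b
  · filter_upwards [Iio_mem_nhds (show (0 : ℝ) < (b - a) / 2 by linarith)] with ε hε _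
    linarith [Set.mem_Iio.1 hε]
  · exact Eventually.of_forall fun _ h ↦ absurd h hab

theorem Finset.card_eq_and_dist_nthSmallest_lt {s t : Finset ℝ} {k : ℕ} {ε : ℝ}
    (ht : t.card = k) (hsep : ∀ a ∈ t, ∀ b ∈ t, a < b → a + 2 * ε ≤ b)
    (hst : IsSmallPerturbation ε (t : Set ℝ) s) :
    s.card = k ∧ ∀ i : Fin k, dist (s.nthSmallest i) (t.nthSmallest i) < ε := by
  set ρ := t.orderEmbOfFin ht
  choose ψ hψ hψ_unique using fun i ↦ hst.1 (ρ i) (t.orderEmbOfFin_mem ht i)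
  have hψ_mono : StrictMono ψ := fun i j hij ↦ by
    have hi := abs_lt.1 (Real.dist_eq _ _ ▸ (hψ i).2)
    have hj := abs_lt.1 (Real.dist_eq _ _ ▸ (hψ j).2)
    have := hsep _ (t.orderEmbOfFin_mem ht i) _ (t.orderEmbOfFin_mem ht j) (ρ.strictMono hij)
    linarith
  have hs : s = Finset.univ.image ψ := by
    ext y
    simp only [Finset.mem_image, Finset.mem_univ, true_and]
    refine ⟨fun hy ↦ ?_, fun ⟨i, hi⟩ ↦ hi ▸ (hψ i).1⟩
    obtain ⟨a, ha, hya⟩ := mem_thickening_iff.1 (hst.2 hy)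
    obtain ⟨i, rfl⟩ : a ∈ Set.range ρ := by rwa [t.range_orderEmbOfFin ht]
    exact ⟨i, (hψ_unique i y ⟨hy, hya⟩).symm⟩
  have hcard : s.card = k := by
    rw [hs, Finset.card_image_of_injective _ hψ_mono.injective, Finset.card_univ,
      Fintype.card_fin]
  refine ⟨hcard, fun i ↦ ?_⟩
  rw [s.nthSmallest_of_card_eq hcard, t.nthSmallest_of_card_eq ht,
    ← Finset.orderEmbOfFin_unique hcard (fun j ↦ (hψ j).1) hψ_mono]
  exact (hψ i).2

theorem eventually_card_eq_and_continuousAt_nthSmallest {X : Type*} [TopologicalSpace X]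
    {s : X → Finset ℝ} {x₀ : X} {k : ℕ}
    (hs : ∀ᶠ ε in 𝓝[>] (0 : ℝ), ∀ᶠ x in 𝓝 x₀, IsSmallPerturbation ε (s x₀ : Set ℝ) (s x))
    (hk : (s x₀).card = k) :
    (∀ᶠ x in 𝓝 x₀, (s x).card = k) ∧
      ∀ i : Fin k, ContinuousAt (fun x ↦ (s x).nthSmallest i) x₀ := by
  have key : ∀ᶠ ε in 𝓝[>] (0 : ℝ), ∀ᶠ x in 𝓝 x₀,
      (s x).card = k ∧ ∀ i : Fin k, dist ((s x).nthSmallest i) ((s x₀).nthSmallest i) < ε := by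
    filter_upwards [hs, nhdsWithin_le_nhds (s x₀).eventually_add_two_mul_le] with ε hε hsep
    filter_upwards [hε] with x hx
    exact Finset.card_eq_and_dist_nthSmallest_lt hk hsep hx
  refine ⟨(key.exists).elim fun ε h ↦ h.mono fun x hx ↦ hx.1, fun i ↦ ?_⟩
  refine Metric.tendsto_nhds.2 fun ε hε ↦ ?_
  obtain ⟨δ, hδ, hδε⟩ := (key.and (Ioc_mem_nhdsGT hε)).exists
  exact hδ.mono fun x hx ↦ (hx.2 i).trans_le hδε.2

namespace Polynomial

theorem continuous_eval_map_evalRingHom {R : Type*} [CommSemiring R] [TopologicalSpace R]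
    [IsTopologicalSemiring R] (e : R[X][X]) :
    Continuous (Function.uncurry fun x y ↦ (e.map (evalRingHom x)).eval y) := by
  have : (Function.uncurry fun x y ↦ (e.map (evalRingHom x)).eval y) =
      fun p : R × R ↦ ∑ i ∈ Finset.range (e.natDegree + 1), (e.coeff i).eval p.1 * p.2 ^ i := by
    ext ⟨x, y⟩
    simp [eval_map, eval₂_eq_sum_range]
  rw [this]
  fun_prop

theorem continuousAt_cauchyBound_map_evalRingHom {K : Type*} [NormedField K] {e : K[X][X]}
    {x₀ : K} (hx₀ : e.leadingCoeff.eval x₀ ≠ 0) :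
    ContinuousAt (fun x ↦ (e.map (evalRingHom x)).cauchyBound) x₀ := by
  have hlc : ∀ᶠ x in 𝓝 x₀, e.leadingCoeff.eval x ≠ 0 :=
    e.leadingCoeff.continuous.continuousAt.eventually_ne hx₀
  have heq : (fun x ↦ (e.map (evalRingHom x)).cauchyBound) =ᶠ[𝓝 x₀] fun x ↦
      (Finset.range e.natDegree).sup (fun i ↦ ‖(e.coeff i).eval x‖₊) /
        ‖e.leadingCoeff.eval x‖₊ + 1 := by
    filter_upwards [hlc] with x hx
    rw [cauchyBound, natDegree_map_of_leadingCoeff_ne_zero _ hx,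
      leadingCoeff_map_of_leadingCoeff_ne_zero _ hx]
    simp only [coeff_map, coe_evalRingHom]
  refine ContinuousAt.congr ?_ heq.symm
  have : ‖e.leadingCoeff.eval x₀‖₊ ≠ 0 := nnnorm_ne_zero_iff.2 hx₀
  fun_prop (disch := exact this)

theorem map_evalRingHom_ne_zero {R : Type*} [CommSemiring R] {e : R[X][X]} {x : R}
    (hx : e.leadingCoeff.eval x ≠ 0) : e.map (evalRingHom x) ≠ 0 := by
  rw [← leadingCoeff_ne_zero, leadingCoeff_map_of_leadingCoeff_ne_zero _ hx]
  exact hx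

theorem eventually_zeroSet_subset_closedBall {K : Type*} [NormedField K] {e : K[X][X]}
    {x₀ : K} (hx₀ : e.leadingCoeff.eval x₀ ≠ 0) :
    ∃ M, ∀ᶠ x in 𝓝 x₀, {y | (e.map (evalRingHom x)).eval y = 0} ⊆ closedBall 0 M := by
  refine ⟨((e.map (evalRingHom x₀)).cauchyBound + 1 : ℝ≥0), ?_⟩
  filter_upwards [e.leadingCoeff.continuous.continuousAt.eventually_ne hx₀,
    (continuousAt_cauchyBound_map_evalRingHom hx₀).eventually_lt_const (lt_add_one _)]
    with x hx hbound y hy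
  rw [mem_closedBall, dist_zero_right, ← coe_nnnorm, NNReal.coe_le_coe]
  exact ((IsRoot.norm_lt_cauchyBound (map_evalRingHom_ne_zero hx) hy).trans hbound).le

theorem coe_roots_toFinset {R : Type*} [CommRing R] [IsDomain R] [DecidableEq R] {p : R[X]}
    (hp : p ≠ 0) :
    (p.roots.toFinset : Set R) = {y | p.eval y = 0} := by
  ext y
  simp [mem_roots hp]

theorem eventually_isSmallPerturbation_roots {e : ℝ[X][X]} {x₀ : ℝ}
    (hlc : e.leadingCoeff.eval x₀ ≠ 0) (hsep : (e.map (evalRingHom x₀)).Separable) :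
    ∀ᶠ ε in 𝓝[>] (0 : ℝ), ∀ᶠ x in 𝓝 x₀, IsSmallPerturbation ε
      ((e.map (evalRingHom x₀)).roots.toFinset : Set ℝ)
      ((e.map (evalRingHom x)).roots.toFinset) := by
  obtain ⟨M, hM⟩ := eventually_zeroSet_subset_closedBall hlc
  have hderiv : ∀ x y, HasDerivAt (fun y ↦ (e.map (evalRingHom x)).eval y)
      (((derivative e).map (evalRingHom x)).eval y) y := fun x y ↦ by
    rw [← derivative_map]
    exact (e.map _).hasDerivAt y
  have hsimple : ∀ y, (e.map (evalRingHom x₀)).eval y = 0 →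
      ((derivative e).map (evalRingHom x₀)).eval y ≠ 0 := fun y hy ↦ by
    rw [← derivative_map]
    exact hsep.eval₂_derivative_ne_zero (RingHom.id ℝ) hy
  have hroots := coe_roots_toFinset (map_evalRingHom_ne_zero hlc)
  have hfin : {y | (e.map (evalRingHom x₀)).eval y = 0}.Finite := hroots ▸ Finset.finite_toSet _
  filter_upwards [eventually_isSmallPerturbation_zeroSet (continuous_eval_map_evalRingHom e)
    hderiv (continuous_eval_map_evalRingHom (derivative e)) hfin hsimple
    (isCompact_closedBall 0 M) hM] with ε hε
  filter_upwards [hε, e.leadingCoeff.continuous.continuousAt.eventually_ne hlc] with x hx hxlc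
  rwa [hroots, coe_roots_toFinset (map_evalRingHom_ne_zero hxlc)]

end Polynomial

/-- Bivariate delineability: if the leading coefficient and the discriminant
of `e ∈ ℝ[x][y]` (with respect to `y`) vanish nowhere on an open interval
`S = (lo, hi)`, then the number of distinct real roots of `e(x0, ·)` is
constant on `S` and the roots are given by continuous functions on `S`. -/
theorem bivariate_delineability (e : Polynomial (Polynomial ℝ))
    (lo hi : ℝ)
    (hlc : ∀ x0 ∈ Set.Ioo lo hi, e.leadingCoeff.eval x0 ≠ 0)
    (hdisc : ∀ x0 ∈ Set.Ioo lo hi, (polyDisc e).eval x0 ≠ 0) :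
    ∃ (k : ℕ) (θ : Fin k → ℝ → ℝ),
      (∀ i, ContinuousOn (θ i) (Set.Ioo lo hi)) ∧
      (∀ x0 ∈ Set.Ioo lo hi,
        Function.Injective (fun i => θ i x0) ∧
        {y : ℝ | (e.map (Polynomial.evalRingHom x0)).eval y = 0}
          = Set.range fun i => θ i x0) := by
  set R : ℝ → Finset ℝ := fun x ↦ (e.map (Polynomial.evalRingHom x)).roots.toFinset
  have hpert : ∀ x₀ ∈ Ioo lo hi, ∀ᶠ ε in 𝓝[>] (0 : ℝ), ∀ᶠ x in 𝓝 x₀,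
      IsSmallPerturbation ε (R x₀ : Set ℝ) (R x) := fun x₀ hx₀ ↦
    Polynomial.eventually_isSmallPerturbation_roots (hlc x₀ hx₀) <|
      separable_of_polyDisc_ne_zero (Polynomial.map_evalRingHom_ne_zero (hlc x₀ hx₀)) <| by
        rw [polyDisc_map _ (hlc x₀ hx₀)]
        exact hdisc x₀ hx₀
  obtain ⟨k, hk⟩ := isPreconnected_Ioo.exists_forall_eq_of_eventually_eq fun x hx ↦
    (eventually_card_eq_and_continuousAt_nthSmallest (hpert x hx) rfl).1
  refine ⟨k, fun i x ↦ (R x).nthSmallest i, fun i x hx ↦ ?_, fun x hx ↦ ?_⟩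
  · exact ((eventually_card_eq_and_continuousAt_nthSmallest (hpert x hx) (hk x hx)).2 i)
      |>.continuousWithinAt
  have hθ : (fun i : Fin k ↦ (R x).nthSmallest i) = (R x).orderEmbOfFin (hk x hx) :=
    funext ((R x).nthSmallest_of_card_eq (hk x hx))
  rw [hθ, Finset.range_orderEmbOfFin,
    Polynomial.coe_roots_toFinset (Polynomial.map_evalRingHom_ne_zero (hlc x hx))]
  exact ⟨((R x).orderEmbOfFin (hk x hx)).injective, rfl⟩
end

section
/- For r > 1, the polynomial 3u^2 + 2ru - 1 in u has exactly one real root u0 in the open interval (-1, 1), and setting b = (u0^3 + r*u0^2 - u0 + r)/2, the value b satisfies 27b^2 - 2r^3*b - 36rb + r^4 + 11r^2 - 1 = 0 and 27b - r^3 - 18r < 0. -/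
private lemma root_pos (r u : ℝ) (hr : 1 < r) (h1 : -1 < u) (h2 : u < 1)
    (he : 3 * u ^ 2 + 2 * r * u - 1 = 0) : 0 < u := by
  by_contra h
  push_neg at h
  nlinarith [mul_nonneg (by linarith : (0:ℝ) ≤ 1 + u) (by linarith : (0:ℝ) ≤ -u),
    mul_nonneg (by linarith : (0:ℝ) ≤ 1 + u) (by linarith : (0:ℝ) ≤ r - 1)]

theorem solotareff_n3_root_and_b (r : ℝ) (hr : 1 < r) :
    (∃! u0 : ℝ, -1 < u0 ∧ u0 < 1 ∧ 3 * u0 ^ 2 + 2 * r * u0 - 1 = 0) ∧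
    (∀ u0 : ℝ, -1 < u0 → u0 < 1 → 3 * u0 ^ 2 + 2 * r * u0 - 1 = 0 →
      (let b := (u0 ^ 3 + r * u0 ^ 2 - u0 + r) / 2;
       27 * b ^ 2 - 2 * r ^ 3 * b - 36 * r * b + r ^ 4 + 11 * r ^ 2 - 1 = 0 ∧
       27 * b - r ^ 3 - 18 * r < 0)) := by
  constructor
  · set s := Real.sqrt (r ^ 2 + 3) with hs
    have hs2 : s ^ 2 = r ^ 2 + 3 := Real.sq_sqrt (by positivity)
    have hsp : 0 ≤ s := Real.sqrt_nonneg _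
    have hsr : r < s := by nlinarith
    refine ⟨(s - r) / 3, ⟨by nlinarith, by nlinarith, by ring_nf; nlinarith⟩, ?_⟩
    rintro y ⟨hy1, hy2, hy⟩
    have hu0 : (0:ℝ) < (s - r) / 3 := by nlinarith
    have hypos : 0 < y := root_pos r y hr hy1 hy2 hy
    have he : 3 * ((s - r) / 3) ^ 2 + 2 * r * ((s - r) / 3) - 1 = 0 := by
      ring_nf; nlinarith
    have hfact : (y - (s - r) / 3) * (3 * (y + (s - r) / 3) + 2 * r) = 0 := by
      linear_combination hy - he
    have hpos : 3 * (y + (s - r) / 3) + 2 * r > 0 := by positivity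
    have := mul_eq_zero.mp hfact
    rcases this with h | h
    · linarith
    · linarith
  · intro u h1 h2 he
    dsimp only
    constructor
    · linear_combination (1 + r^2/4 - (5/2)*r*u - (1/2)*r^3*u - (15/4)*u^2
        + (1/4)*r^2*u^2 + 3*r*u^3 + (9/4)*u^4) * he
    · have hu : 0 < u := root_pos r u hr h1 h2 he
      have h27 : 27 * ((u ^ 3 + r * u ^ 2 - u + r) / 2) = 15 * r - 9 * u - 3 * r ^ 2 * u := by
        linear_combination ((9:ℝ)/2 * u + 3/2 * r) * he
      rw [h27]
      nlinarith [mul_pos (mul_pos (zero_lt_one.trans hr) (zero_lt_one.trans hr)) hu]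
end

section
/- For every r > 1, the formula ∃u (-1 < u ∧ u < 1 ∧ 3u^2 + 2ru - 1 = 0 ∧ u^3 + ru^2 - u + r - 2b = 0) holds for a real number b if and only if 27b^2 - 2r^3*b - 36rb + r^4 + 11r^2 - 1 = 0 and 27b - r^3 - 18r < 0. -/
theorem solotareff_n3_qe_equivalence (r b : ℝ) (hr : 1 < r) :
    (∃ u : ℝ, -1 < u ∧ u < 1 ∧ 3 * u ^ 2 + 2 * r * u - 1 = 0 ∧
        u ^ 3 + r * u ^ 2 - u + r - 2 * b = 0) ↔
      (27 * b ^ 2 - 2 * r ^ 3 * b - 36 * r * b + r ^ 4 + 11 * r ^ 2 - 1 = 0 ∧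
       27 * b - r ^ 3 - 18 * r < 0) := by
  constructor
  · rintro ⟨u, hu1, hu2, hP, hQ⟩
    have hupos : 0 < u := by nlinarith [mul_nonneg (le_of_lt (by linarith : (0:ℝ) < u + 1)) (le_of_lt (by linarith : (0:ℝ) < u + 1))]
    constructor
    · linear_combination (1 + r^2/4 - 5/2*u*r - 1/2*u*r^3 - 15/4*u^2 + 1/4*u^2*r^2
          + 3*u^3*r + 9/4*u^4) * hP
        + (-27/2*b + 45/4*r + r^3 + 27/4*u - 27/4*u^2*r - 27/4*u^3) * hQ
    · have key : 27 * b - r ^ 3 - 18 * r = -(r^2 + 3) * (3*u + r) := by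
        linear_combination (3/2*r + 9/2*u) * hP - 27/2 * hQ
      rw [key]
      have h1 : 0 < r^2 + 3 := by nlinarith
      have h2 : 0 < 3*u + r := by linarith
      nlinarith
  · rintro ⟨hR, hlt⟩
    set s := Real.sqrt (r^2 + 3) with hs
    have hpos : (0:ℝ) < r^2 + 3 := by nlinarith
    have hs2 : s ^ 2 = r ^ 2 + 3 := Real.sq_sqrt (le_of_lt hpos)
    have hsnn : 0 ≤ s := Real.sqrt_nonneg _
    have hsr : r < s := by nlinarith
    have hsr3 : s < r + 3 := by nlinarith
    set u : ℝ := (-r + s) / 3 with hu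
    have hupos : 0 < u := by rw [hu]; linarith
    have hu2 : u < 1 := by rw [hu]; linarith
    have hP : 3 * u ^ 2 + 2 * r * u - 1 = 0 := by
      rw [hu]; linear_combination (1/3) * hs2
    set b' : ℝ := (u ^ 3 + r * u ^ 2 - u + r) / 2 with hb'
    have hQ' : u ^ 3 + r * u ^ 2 - u + r - 2 * b' = 0 := by rw [hb']; ring
    have hR' : 27 * b' ^ 2 - 2 * r ^ 3 * b' - 36 * r * b' + r ^ 4 + 11 * r ^ 2 - 1 = 0 := by
      linear_combination (1 + r^2/4 - 5/2*u*r - 1/2*u*r^3 - 15/4*u^2 + 1/4*u^2*r^2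
          + 3*u^3*r + 9/4*u^4) * hP
        + (-27/2*b' + 45/4*r + r^3 + 27/4*u - 27/4*u^2*r - 27/4*u^3) * hQ'
    have hlt' : 27 * b' - r ^ 3 - 18 * r < 0 := by
      have key : 27 * b' - r ^ 3 - 18 * r = -(r^2 + 3) * (3*u + r) := by
        linear_combination (3/2*r + 9/2*u) * hP - 27/2 * hQ'
      rw [key]; nlinarith
    have hfac : (b - b') * (27 * (b + b') - 2 * r^3 - 36 * r) = 0 := by
      linear_combination hR - hR'
    have hbb : b = b' := by
      rcases mul_eq_zero.mp hfac with h | h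
      · linarith [sub_eq_zero.mp h]
      · exfalso; linarith
    exact ⟨u, by linarith, hu2, hP, by rw [hbb]; exact hQ'⟩
end
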